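/- arXiv:1703.05464 — 6 statements merged into one kernel-verified Lean document; each statement's English description precedes it below -/
import Mathlib

section
/- If a nonempty achievable multiset of fixed point data has exactly k elements, then k ≥ 2; moreover, writing s for the number of its elements with sign +1 minus the number of its elements with sign −1, one has 2 − k ≤ s ≤ k − 2 and s ≡ k (mod 2). -/
/-- A fixed point datum: a sign (an integer, intended to be `±1`) together with
an unordered pair (a multiset with two elements) of positive integers. -/
abbrev FPDatum : Type := ℤ × Multiset ℕ+

/-- A finite multiset of fixed point data is achievable if it can be obtained
from the empty multiset by finitely many applications of the steps:
(1) add `(+1, {a, b})` and `(-1, {a, b})` for relatively prime positive `a`, `b`;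
(2) replace `(+1, {c, d})` by `(+1, {c, c+d})` and `(+1, {d, c+d})`;
(3) replace `(-1, {e, f})` by `(-1, {e, e+f})` and `(-1, {f, e+f})`. -/
inductive Achievable : Multiset FPDatum → Prop
  | empty : Achievable 0
  | add {M : Multiset FPDatum} (a b : ℕ+) (hab : Nat.Coprime a b) (hM : Achievable M) :
      Achievable ((1, ({a, b} : Multiset ℕ+)) ::ₘ (-1, ({a, b} : Multiset ℕ+)) ::ₘ M)
  | blowupPos {M : Multiset FPDatum} (c d : ℕ+)
      (hM : Achievable ((1, ({c, d} : Multiset ℕ+)) ::ₘ M)) :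
      Achievable ((1, ({c, c + d} : Multiset ℕ+)) ::ₘ (1, ({d, c + d} : Multiset ℕ+)) ::ₘ M)
  | blowupNeg {M : Multiset FPDatum} (e f : ℕ+)
      (hM : Achievable ((-1, ({e, f} : Multiset ℕ+)) ::ₘ M)) :
      Achievable ((-1, ({e, e + f} : Multiset ℕ+)) ::ₘ (-1, ({f, e + f} : Multiset ℕ+)) ::ₘ M)

/-- The number of elements with sign `+1` minus the number of elements with sign `-1`. -/
def signedCount (M : Multiset FPDatum) : ℤ :=
  ((M.countP fun x => x.1 = 1 : ℕ) : ℤ) - ((M.countP fun x => x.1 = -1 : ℕ) : ℤ)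

lemma countP_singleton' (p : FPDatum → Prop) [DecidablePred p] (x : FPDatum) :
    Multiset.countP p {x} = if p x then 1 else 0 := by
  rw [show ({x} : Multiset FPDatum) = x ::ₘ 0 from rfl, Multiset.countP_cons]
  simp

lemma achievable_aux (M : Multiset FPDatum) (hM : Achievable M) :
    M = 0 ∨ (1 ≤ M.countP (fun x => x.1 = 1) ∧ 1 ≤ M.countP (fun x => x.1 = -1) ∧
      M.card = M.countP (fun x => x.1 = 1) + M.countP (fun x => x.1 = -1)) := by
  induction hM with
  | empty => left; rfl
  | add a b hab hM ih =>
      right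
      rcases ih with rfl | ⟨h1, h2, h3⟩ <;>
        simp_all [Multiset.countP_cons, Multiset.card_cons, countP_singleton'] <;> omega
  | blowupPos c d hM ih =>
      right
      rcases ih with h | ⟨h1, h2, h3⟩
      · exact absurd h (Multiset.cons_ne_zero)
      · simp_all [Multiset.countP_cons, Multiset.card_cons]; omega
  | blowupNeg e f hM ih =>
      right
      rcases ih with h | ⟨h1, h2, h3⟩
      · exact absurd h (Multiset.cons_ne_zero)
      · simp_all [Multiset.countP_cons, Multiset.card_cons]; omega

theorem stmt0 (M : Multiset FPDatum) (hM : Achievable M) (hne : M ≠ 0) :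
    2 ≤ M.card ∧
    2 - (M.card : ℤ) ≤ signedCount M ∧
    signedCount M ≤ (M.card : ℤ) - 2 ∧
    signedCount M ≡ (M.card : ℤ) [ZMOD 2] := by
  rcases achievable_aux M hM with rfl | ⟨h1, h2, h3⟩
  · exact absurd rfl hne
  · unfold signedCount Int.ModEq
    omega
end

section
/- For every pair of integers (j, k) with k ≥ 2, 2 − k ≤ j ≤ k − 2 and j ≡ k (mod 2), there exists an achievable multiset of fixed point data with exactly k elements in which the number of elements with sign +1 minus the number of elements with sign −1 equals j. -/
lemma negChain (n : ℕ) : ∃ (e f : ℕ+) (M : Multiset FPDatum),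
    Achievable ((1, ({1, 1} : Multiset ℕ+)) ::ₘ (-1, ({e, f} : Multiset ℕ+)) ::ₘ M) ∧
    M.card = n ∧ (M.countP fun x => x.1 = 1) = 0 ∧ (M.countP fun x => x.1 = -1) = n := by
  induction n with
  | zero =>
    exact ⟨1, 1, 0, Achievable.add 1 1 (Nat.coprime_one_left _) Achievable.empty,
      rfl, rfl, rfl⟩
  | succ n ih =>
    obtain ⟨e, f, M, hA, hcard, hp, hn⟩ := ih
    rw [Multiset.cons_swap] at hA
    have hA2 := Achievable.blowupNeg e f hA
    refine ⟨e, e + f, (-1, ({f, e + f} : Multiset ℕ+)) ::ₘ M, ?_, ?_, ?_, ?_⟩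
    · have : (1, ({1, 1} : Multiset ℕ+)) ::ₘ (-1, ({e, e + f} : Multiset ℕ+)) ::ₘ
          (-1, ({f, e + f} : Multiset ℕ+)) ::ₘ M =
          (-1, ({e, e + f} : Multiset ℕ+)) ::ₘ (-1, ({f, e + f} : Multiset ℕ+)) ::ₘ
          (1, ({1, 1} : Multiset ℕ+)) ::ₘ M := by
        rw [Multiset.cons_swap ((1 : ℤ), ({1, 1} : Multiset ℕ+))]
        congr 1
        rw [Multiset.cons_swap]
      rw [this]
      exact hA2
    · simp [hcard]
    · simp [Multiset.countP_cons, hp]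
    · simp [Multiset.countP_cons, hn]

lemma posChain : ∀ (p : ℕ) (c d : ℕ+) (N : Multiset FPDatum),
    Achievable ((1, ({c, d} : Multiset ℕ+)) ::ₘ N) →
    ∃ M, Achievable M ∧ M.card = p + 1 + N.card ∧
      (M.countP fun x => x.1 = 1) = p + 1 + N.countP (fun x => x.1 = 1) ∧
      (M.countP fun x => x.1 = -1) = N.countP (fun x => x.1 = -1) := by
  intro p
  induction p with
  | zero =>
    intro c d N hA
    refine ⟨_, hA, by simp; omega, ?_, ?_⟩ <;> (simp [Multiset.countP_cons]; try omega)
  | succ p ih =>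
    intro c d N hA
    have hA2 := Achievable.blowupPos c d hA
    obtain ⟨M, hM, hcard, hp, hn⟩ := ih c (c + d) ((1, ({d, c + d} : Multiset ℕ+)) ::ₘ N) hA2
    refine ⟨M, hM, ?_, ?_, ?_⟩
    · simp at hcard; omega
    · simp [Multiset.countP_cons] at hp; omega
    · simp [Multiset.countP_cons] at hn; omega


theorem stmt1 (j k : ℤ) (hk : 2 ≤ k) (hlow : 2 - k ≤ j) (hhigh : j ≤ k - 2)
    (hmod : j ≡ k [ZMOD 2]) :
    ∃ M : Multiset FPDatum, Achievable M ∧ (M.card : ℤ) = k ∧ signedCount M = j := by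
  have hm : j % 2 = k % 2 := hmod
  obtain ⟨p, hp⟩ : ∃ p : ℕ, (p : ℤ) = (k - 2 + j) / 2 :=
    ⟨((k - 2 + j) / 2).toNat, Int.toNat_of_nonneg (by omega)⟩
  obtain ⟨n, hn⟩ : ∃ n : ℕ, (n : ℤ) = (k - 2 - j) / 2 :=
    ⟨((k - 2 - j) / 2).toNat, Int.toNat_of_nonneg (by omega)⟩
  obtain ⟨e, f, N, hA, hcard, hposN, hnegN⟩ := negChain n
  rw [show ((1 : ℤ), ({1, 1} : Multiset ℕ+)) ::ₘ (-1, ({e, f} : Multiset ℕ+)) ::ₘ N =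
      (1, ({1, 1} : Multiset ℕ+)) ::ₘ ((-1, ({e, f} : Multiset ℕ+)) ::ₘ N) from rfl] at hA
  obtain ⟨M, hM, hcardM, hpM, hnM⟩ := posChain p 1 1 _ hA
  refine ⟨M, hM, ?_, ?_⟩
  · simp [Multiset.card_cons, hcard] at hcardM
    push_cast [hcardM]
    omega
  · simp [Multiset.countP_cons, hposN, hnegN] at hpM hnM
    simp [signedCount, hpM, hnM]
    push_cast
    omega
end

section
/- If an achievable multiset of fixed point data has exactly 3 elements, then there exist relatively prime positive integers a and b such that the multiset equals either {(−1, {a, b}), (+1, {a, a+b}), (+1, {b, a+b})} or {(+1, {a, b}), (−1, {a, a+b}), (−1, {b, a+b})}; in the first case the number of +1 signs minus the number of −1 signs is 1, and in the second case it is −1. -/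
lemma pair_eq {c d a b : ℕ+} (h : ({c,d} : Multiset ℕ+) = {a,b}) : (c=a∧d=b)∨(c=b∧d=a) := by
  rw [show ({c,d}:Multiset ℕ+) = c ::ₘ {d} from rfl, show ({a,b}:Multiset ℕ+) = a ::ₘ {b} from rfl,
    Multiset.cons_eq_cons] at h
  rcases h with ⟨h1, h2⟩ | ⟨hne, cs, h1, h2⟩
  · exact Or.inl ⟨h1, by simpa using h2⟩
  · have : cs = 0 := by
      have := congrArg Multiset.card h1; simp at this; simp [this]
    subst this
    simp at h1 h2
    exact Or.inr ⟨h2.symm, h1⟩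

lemma notCard1 {M : Multiset FPDatum} (hM : Achievable M) : M.card ≠ 1 := by
  cases hM <;> simp

lemma card2 {M : Multiset FPDatum} (hM : Achievable M) (hc : M.card = 2) :
    ∃ a b : ℕ+, Nat.Coprime a b ∧
      M = {(1, ({a, b} : Multiset ℕ+)), (-1, ({a, b} : Multiset ℕ+))} := by
  cases hM with
  | empty => simp at hc
  | @add N a b hab hN =>
    have h0 : N = 0 := by simpa using hc
    subst h0
    exact ⟨a, b, hab, rfl⟩
  | @blowupPos N c d hN =>
    have h0 : N = 0 := by simpa using hc
    exact absurd (by simp [h0] : ((1, ({c, d} : Multiset ℕ+)) ::ₘ N).card = 1) (notCard1 hN)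
  | @blowupNeg N e f hN =>
    have h0 : N = 0 := by simpa using hc
    exact absurd (by simp [h0] : ((-1, ({e, f} : Multiset ℕ+)) ::ₘ N).card = 1) (notCard1 hN)

theorem stmt2 (M : Multiset FPDatum) (hM : Achievable M) (hcard : M.card = 3) :
    ∃ a b : ℕ+, Nat.Coprime a b ∧
      ((M = {(-1, ({a, b} : Multiset ℕ+)), (1, ({a, a + b} : Multiset ℕ+)),
              (1, ({b, a + b} : Multiset ℕ+))} ∧ signedCount M = 1) ∨
       (M = {(1, ({a, b} : Multiset ℕ+)), (-1, ({a, a + b} : Multiset ℕ+)),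
              (-1, ({b, a + b} : Multiset ℕ+))} ∧ signedCount M = -1)) := by
  have rot : ∀ (x y z : FPDatum), (x ::ₘ y ::ₘ (z ::ₘ 0)) = (z ::ₘ x ::ₘ (y ::ₘ 0)) := by
    intro x y z
    rw [Multiset.cons_swap y z, Multiset.cons_swap x z]
  cases hM with
  | empty => simp at hcard
  | @add N a b hab hN =>
    exact absurd (by simpa using hcard) (notCard1 hN)
  | @blowupPos N c d hN =>
    have hc2 : ((1, ({c, d} : Multiset ℕ+)) ::ₘ N).card = 2 := by simp at hcard ⊢; omega
    obtain ⟨a, b, hab, h⟩ := card2 hN hc2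
    rw [show ({(1, ({a, b} : Multiset ℕ+)), (-1, ({a, b} : Multiset ℕ+))} : Multiset FPDatum)
        = (1, ({a, b} : Multiset ℕ+)) ::ₘ {(-1, ({a, b} : Multiset ℕ+))} from rfl,
      Multiset.cons_eq_cons] at h
    rcases h with ⟨h1, h2⟩ | ⟨hne, cs, h1, h2⟩
    · have hpair : ({c, d} : Multiset ℕ+) = {a, b} := by
        simpa using congrArg Prod.snd h1
      have hcop : Nat.Coprime c d := by
        rcases pair_eq hpair with ⟨hc, hd⟩ | ⟨hc, hd⟩
        · subst hc; subst hd; exact hab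
        · subst hc; subst hd; exact hab.symm
      refine ⟨c, d, hcop, Or.inl ⟨?_, ?_⟩⟩
      · rw [h2]
        simp only [Multiset.insert_eq_cons, ← hpair]
        exact rot _ _ _
      · rw [h2, ← hpair]
        unfold signedCount
        rw [show ({(-1, ({c,d}:Multiset ℕ+))} : Multiset FPDatum)
            = (-1, ({c,d}:Multiset ℕ+)) ::ₘ 0 from rfl]
        simp only [Multiset.countP_cons, Multiset.countP_zero]
        norm_num
    · exfalso
      have : cs = 0 := by
        have := congrArg Multiset.card h2; simp at this; simp [this]
      subst this
      simp at h2
    | @blowupNeg N e f hN =>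
    have hc2 : ((-1, ({e, f} : Multiset ℕ+)) ::ₘ N).card = 2 := by simp at hcard ⊢; omega
    obtain ⟨a, b, hab, h⟩ := card2 hN hc2
    rw [show ({(1, ({a, b} : Multiset ℕ+)), (-1, ({a, b} : Multiset ℕ+))} : Multiset FPDatum)
        = (1, ({a, b} : Multiset ℕ+)) ::ₘ {(-1, ({a, b} : Multiset ℕ+))} from rfl,
      Multiset.cons_eq_cons] at h
    rcases h with ⟨h1, h2⟩ | ⟨hne, cs, h1, h2⟩
    · exfalso
      have := congrArg Prod.fst h1
      simp at this
    · have hcs : cs = 0 := by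
        have := congrArg Multiset.card h2; simp at this; simp [this]
      subst hcs
      simp at h1 h2
      have hpair : ({e, f} : Multiset ℕ+) = {a, b} := h2.symm
      have hN1 : N = {(1, ({a, b} : Multiset ℕ+))} := by simpa using h1
      have hcop : Nat.Coprime e f := by
        rcases pair_eq hpair with ⟨hc, hd⟩ | ⟨hc, hd⟩
        · subst hc; subst hd; exact hab
        · subst hc; subst hd; exact hab.symm
      refine ⟨e, f, hcop, Or.inr ⟨?_, ?_⟩⟩
      · rw [hN1]
        simp only [Multiset.insert_eq_cons, ← hpair]
        exact rot _ _ _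
      · rw [hN1, ← hpair]
        unfold signedCount
        rw [show ({(1, ({e,f}:Multiset ℕ+))} : Multiset FPDatum)
            = (1, ({e,f}:Multiset ℕ+)) ::ₘ 0 from rfl]
        simp only [Multiset.countP_cons, Multiset.countP_zero]
        norm_num
end

section
/- For every achievable multiset of fixed point data and every positive integer w, the total number of occurrences of w among the unordered pairs of all elements of the multiset, counted with multiplicity, is even. -/
theorem stmt6 (M : Multiset FPDatum) (hM : Achievable M) (w : ℕ+) :
    Even ((M.map fun x => x.2.count w).sum) := by
  induction hM with
  | empty => simp
  | add a b hab hM ih =>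
    simp only [Multiset.map_cons, Multiset.sum_cons] at *
    rw [Nat.even_iff] at ih ⊢
    omega
  | blowupPos c d hM ih =>
    simp only [Multiset.map_cons, Multiset.sum_cons, Multiset.insert_eq_cons,
      Multiset.count_cons, Multiset.count_singleton] at *
    rw [Nat.even_iff] at ih ⊢
    split_ifs at ih ⊢ <;> omega
  | blowupNeg e f hM ih =>
    simp only [Multiset.map_cons, Multiset.sum_cons, Multiset.insert_eq_cons,
      Multiset.count_cons, Multiset.count_singleton] at *
    rw [Nat.even_iff] at ih ⊢
    split_ifs at ih ⊢ <;> omega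
end

section
/- Suppose the signature series S is a constant power series, i.e., S = C·1 for some integer C, and let m be a positive integer such that m ≤ w_p^i for every p ∈ F and every 1 ≤ i ≤ n. Then Σ_{p ∈ F} ε(p) · N_p(m) = 0, where N_p(m) denotes the number of indices i with w_p^i = m. In particular, the signed count of the smallest occurring weight, weighted by multiplicity, vanishes. -/
open PowerSeries

/-- The local factor `(1 + t^w) · (1 - t^w)⁻¹` of the Atiyah–Singer signature
formula, as a formal power series with integer coefficients.  For `0 < w` the
series `1 - t^w` has constant coefficient `1`, hence is a unit, and
`Ring.inverse` is its genuine multiplicative inverse. -/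
noncomputable def sigFactor (w : ℕ) : PowerSeries ℤ :=
  (1 + (X : PowerSeries ℤ) ^ w) * Ring.inverse (1 - (X : PowerSeries ℤ) ^ w)

/-- The signature series `S = Σ_{p ∈ F} ε(p) · Π_{i=1}^n (1 + t^{w_p^i}) (1 - t^{w_p^i})⁻¹`
attached to a finite index set `F`, a sign function `ε`, and weights `w`. -/
noncomputable def sigSeries {F : Type} [Fintype F] {n : ℕ}
    (ε : F → ℤ) (w : F → Fin n → ℕ) : PowerSeries ℤ :=
  ∑ p : F, ε p • ∏ i : Fin n, sigFactor (w p i)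

/-! Since `(1 + t^w)(1 - t^w)⁻¹ = 1 + 2(t^w + t^{2w} + ⋯)`, when every weight is at least `m`
the coefficient of `t^m` in `∏ᵢ (1 + t^{w_p^i})(1 - t^{w_p^i})⁻¹` is `2 N_p(m)`. Hence the
coefficient of `t^m` in `S` is `2 Σ_p ε(p) N_p(m)`, and it vanishes when `S` is constant. -/

section

variable {R : Type*} [CommRing R]

/-- A product of two or more of the `g i` is divisible by `X ^ (2 * m)`, so only the linear
terms of the expanded product reach the coefficient of `X ^ m`. -/
theorem coeff_prod_one_add_of_X_pow_dvd {ι : Type*} (s : Finset ι) (g : ι → R⟦X⟧) {m : ℕ}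
    (hm : 0 < m) (hg : ∀ i ∈ s, X ^ m ∣ g i) :
    coeff m (∏ i ∈ s, (1 + g i)) = ∑ i ∈ s, coeff m (g i) := by
  induction s using Finset.cons_induction with
  | empty => simp [coeff_one, hm.ne']
  | cons a s ha ih =>
    rw [Finset.forall_mem_cons] at hg
    obtain ⟨⟨h, hga⟩, hgs⟩ := hg
    have hconst : constantCoeff (∏ i ∈ s, (1 + g i)) = 1 := by
      rw [map_prod]
      refine Finset.prod_eq_one fun i hi => ?_
      have : constantCoeff (g i) = 0 :=
        X_dvd_iff.mp ((dvd_pow_self X hm.ne').trans (hgs i hi))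
      rw [map_add, map_one, this, add_zero]
    have hcoeff : ∀ q : R⟦X⟧, coeff m (X ^ m * q) = constantCoeff q := fun q => by
      rw [coeff_X_pow_mul', if_pos le_rfl, Nat.sub_self, coeff_zero_eq_constantCoeff]
    rw [Finset.prod_cons, Finset.sum_cons, add_mul, one_mul, map_add, ih hgs, hga, mul_assoc,
      hcoeff, hcoeff, map_mul, hconst, mul_one, add_comm]

theorem isUnit_one_sub_X_pow {v : ℕ} (hv : 0 < v) : IsUnit (1 - X ^ v : R⟦X⟧) := by
  simp [isUnit_iff_constantCoeff, zero_pow hv.ne']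

theorem constantCoeff_inverse_one_sub_X_pow {v : ℕ} (hv : 0 < v) :
    constantCoeff (Ring.inverse (1 - X ^ v : R⟦X⟧)) = 1 := by
  simpa [zero_pow hv.ne'] using
    congrArg constantCoeff (Ring.mul_inverse_cancel _ (isUnit_one_sub_X_pow (R := R) hv))

end

theorem sigFactor_sub_one {v : ℕ} (hv : 0 < v) :
    sigFactor v - 1 = X ^ v * (2 * Ring.inverse (1 - X ^ v)) := by
  have hunit := Ring.mul_inverse_cancel _ (isUnit_one_sub_X_pow (R := ℤ) hv)
  rw [sigFactor]
  linear_combination hunit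

theorem coeff_sigFactor_sub_one {m v : ℕ} (hm : 0 < m) (hmv : m ≤ v) :
    coeff m (sigFactor v - 1) = if v = m then 2 else 0 := by
  rw [sigFactor_sub_one (hm.trans_le hmv), coeff_X_pow_mul']
  split_ifs with hle heq heq
  · subst heq
    rw [Nat.sub_self, coeff_zero_eq_constantCoeff, map_mul,
      constantCoeff_inverse_one_sub_X_pow hm, mul_one, map_ofNat]
  · exact absurd (le_antisymm hle hmv) heq
  · exact absurd heq.le hle
  · rfl

theorem coeff_prod_sigFactor {ι : Type*} [Fintype ι] {m : ℕ} (hm : 0 < m) (v : ι → ℕ)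
    (hv : ∀ i, m ≤ v i) :
    coeff m (∏ i, sigFactor (v i)) = 2 * (Finset.univ.filter fun i => v i = m).card := by
  have hdvd : ∀ i ∈ Finset.univ, X ^ m ∣ sigFactor (v i) - 1 := fun i _ => by
    rw [sigFactor_sub_one (hm.trans_le (hv i))]
    exact (pow_dvd_pow X (hv i)).mul_right _
  have h := coeff_prod_one_add_of_X_pow_dvd Finset.univ _ hm hdvd
  simp only [add_sub_cancel, coeff_sigFactor_sub_one hm (hv _)] at h
  rw [h, Finset.sum_ite, Finset.sum_const_zero, add_zero, Finset.sum_const, nsmul_eq_mul,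
    mul_comm]

theorem coeff_sigSeries {F : Type} [Fintype F] {n m : ℕ} (hm : 0 < m) (ε : F → ℤ)
    (w : F → Fin n → ℕ) (hmin : ∀ p i, m ≤ w p i) :
    coeff m (sigSeries ε w) =
      2 * ∑ p, ε p * ((Finset.univ.filter fun i => w p i = m).card : ℤ) := by
  rw [sigSeries, map_sum, Finset.mul_sum]
  refine Finset.sum_congr rfl fun p _ => ?_
  rw [map_zsmul, coeff_prod_sigFactor hm _ (hmin p), smul_eq_mul]
  ring

theorem stmt7_general {F : Type} [Fintype F] {n : ℕ} (ε : F → ℤ)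
    (w : F → Fin n → ℕ)
    (hconst : ∃ C : ℤ, sigSeries ε w = PowerSeries.C C)
    (m : ℕ) (hm : 0 < m) (hmin : ∀ p i, m ≤ w p i) :
    ∑ p : F, ε p * ((Finset.univ.filter fun i => w p i = m).card : ℤ) = 0 := by
  obtain ⟨C, hC⟩ := hconst
  have h := coeff_sigSeries hm ε w hmin
  rw [hC, coeff_C, if_neg hm.ne'] at h
  omega

theorem stmt7 {F : Type} [Fintype F] {n : ℕ} (ε : F → ℤ)
    (hε : ∀ p, ε p = 1 ∨ ε p = -1) (w : F → Fin n → ℕ)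
    (hw : ∀ p i, 0 < w p i)
    (hconst : ∃ C : ℤ, sigSeries ε w = PowerSeries.C C)
    (m : ℕ) (hm : 0 < m) (hmin : ∀ p i, m ≤ w p i) :
    ∑ p : F, ε p * ((Finset.univ.filter fun i => w p i = m).card : ℤ) = 0 :=
  stmt7_general ε w hconst m hm hmin
end

section
/- Suppose n ≥ 1 and there are positive integers a_1, …, a_n such that w_p^i = a_i for every p ∈ F and every 1 ≤ i ≤ n. If the signature series S is a constant power series, then the number of p ∈ F with ε(p) = +1 equals the number of p ∈ F with ε(p) = −1, and consequently S = 0. -/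
open PowerSeries

/-! With equal weights `S = (Σ ε) • P`, where `P = Π (1 + t^{a_i}) (1 - t^{a_i})⁻¹` has
constant term `1`. `P ≠ 1`, since otherwise `Π (1 + t^{a_i}) = Π (1 - t^{a_i})`, which fails at
`t = 1`. Comparing constant terms, `S` constant forces `(Σ ε) • (P - 1) = 0`, hence `Σ ε = 0`,
i.e. the signs are balanced. -/

theorem isUnit_one_sub_X_pow_s8 {R : Type*} [CommRing R] {w : ℕ} (hw : 0 < w) :
    IsUnit (1 - X ^ w : PowerSeries R) := by
  rw [isUnit_iff_constantCoeff]
  simp [hw.ne']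

theorem sigFactor_mul_one_sub_X_pow {w : ℕ} (hw : 0 < w) :
    sigFactor w * (1 - X ^ w) = 1 + X ^ w := by
  rw [sigFactor, mul_assoc, Ring.inverse_mul_cancel _ (isUnit_one_sub_X_pow_s8 hw), mul_one]

theorem constantCoeff_sigFactor {w : ℕ} (hw : 0 < w) : constantCoeff (sigFactor w) = 1 := by
  simpa [hw.ne'] using congrArg constantCoeff (sigFactor_mul_one_sub_X_pow hw)

theorem prod_one_add_X_pow_ne_prod_one_sub_X_pow {ι : Type*} [Fintype ι] [Nonempty ι]
    (a : ι → ℕ) : ∏ i, (1 + X ^ a i : PowerSeries ℤ) ≠ ∏ i, (1 - X ^ a i) := by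
  intro h
  have hpoly : ∏ i, (1 + Polynomial.X ^ a i : Polynomial ℤ) = ∏ i, (1 - Polynomial.X ^ a i) := by
    apply Polynomial.coe_injective
    rw [← Polynomial.coeToPowerSeries.ringHom_apply, ← Polynomial.coeToPowerSeries.ringHom_apply]
    simpa [map_prod, Polynomial.coeToPowerSeries.ringHom_apply] using h
  simpa [Polynomial.eval_prod] using congrArg (Polynomial.eval 1) hpoly

theorem prod_sigFactor_ne_one {ι : Type*} [Fintype ι] [Nonempty ι] {a : ι → ℕ}
    (ha : ∀ i, 0 < a i) : ∏ i, sigFactor (a i) ≠ 1 := by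
  intro h
  apply prod_one_add_X_pow_ne_prod_one_sub_X_pow a
  calc ∏ i, (1 + X ^ a i : PowerSeries ℤ)
      = (∏ i, sigFactor (a i)) * ∏ i, (1 - X ^ a i) := by
        simp_rw [← Finset.prod_mul_distrib, sigFactor_mul_one_sub_X_pow (ha _)]
    _ = ∏ i, (1 - X ^ a i) := by rw [h, one_mul]

theorem constantCoeff_prod_sigFactor {ι : Type*} [Fintype ι] {a : ι → ℕ}
    (ha : ∀ i, 0 < a i) : constantCoeff (∏ i, sigFactor (a i)) = 1 := by
  rw [map_prod]
  exact Finset.prod_eq_one fun i _ => constantCoeff_sigFactor (ha i)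

theorem eq_zero_of_smul_eq_C {c d : ℤ} {P : PowerSeries ℤ} (hP0 : constantCoeff P = 1)
    (hP : P ≠ 1) (h : c • P = C d) : c = 0 := by
  have hdc : d = c := by simpa [hP0] using (congrArg constantCoeff h).symm
  rw [zsmul_eq_mul, ← eq_intCast C] at h
  have hc : C c * (P - 1) = 0 := by rw [mul_sub, h, hdc, mul_one, sub_self]
  refine C_injective ?_
  rw [map_zero]
  exact (mul_eq_zero.mp hc).resolve_right (sub_ne_zero.mpr hP)

theorem sigSeries_eq_of_weights_eq {F : Type} [Fintype F] {n : ℕ} (ε : F → ℤ)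
    {w : F → Fin n → ℕ} {a : Fin n → ℕ} (hw : ∀ p i, w p i = a i) :
    sigSeries ε w = (∑ p, ε p) • ∏ i, sigFactor (a i) := by
  simp only [sigSeries, hw, Finset.sum_smul]

theorem card_filter_eq_one_eq_card_filter_eq_neg_one {F : Type*} {s : Finset F} {ε : F → ℤ}
    (hε : ∀ p ∈ s, ε p = 1 ∨ ε p = -1) (hsum : ∑ p ∈ s, ε p = 0) :
    (s.filter fun p => ε p = 1).card = (s.filter fun p => ε p = -1).card := by
  have hsplit : ∑ p ∈ s, ε p =
      ∑ p ∈ s, (if ε p = 1 then 1 else 0) - ∑ p ∈ s, (if ε p = -1 then 1 else 0) := by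
    rw [← Finset.sum_sub_distrib]
    refine Finset.sum_congr rfl fun p hp => ?_
    rcases hε p hp with h | h <;> simp [h]
  rw [hsplit, Finset.sum_boole, Finset.sum_boole, sub_eq_zero] at hsum
  exact_mod_cast hsum

theorem stmt8 {F : Type} [Fintype F] {n : ℕ} (hn : 1 ≤ n) (ε : F → ℤ)
    (hε : ∀ p, ε p = 1 ∨ ε p = -1) (w : F → Fin n → ℕ)
    (a : Fin n → ℕ) (ha : ∀ i, 0 < a i) (hw : ∀ p i, w p i = a i)
    (hconst : ∃ C : ℤ, sigSeries ε w = PowerSeries.C C) :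
    (Finset.univ.filter fun p => ε p = 1).card =
      (Finset.univ.filter fun p => ε p = -1).card ∧
    sigSeries ε w = 0 := by
  obtain ⟨C, hC⟩ := hconst
  have : Nonempty (Fin n) := ⟨⟨0, hn⟩⟩
  rw [sigSeries_eq_of_weights_eq ε hw] at hC ⊢
  have hsum : ∑ p, ε p = 0 :=
    eq_zero_of_smul_eq_C (constantCoeff_prod_sigFactor ha) (prod_sigFactor_ne_one ha) hC
  exact ⟨card_filter_eq_one_eq_card_filter_eq_neg_one (fun p _ => hε p) hsum,
    by rw [hsum, zero_smul]⟩
end
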